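/- For all b>0, T>0, D>0: ∫_0^T exp(-b^2/(2 D t (1 - t/T))) / (t (1 - t/T))^{3/2} dt = (2 sqrt(2 pi D) / b) * exp(-2 b^2/(T D)). -/

import Mathlib

/-!
The substitution `u = (2t - T) / √(t (T - t))` maps `(0, T)` increasingly onto `ℝ`, with
`du = T² / (2 (t (T - t))^{3/2}) dt` and `u² = T² / (t (T - t)) - 4`. Since
`b² / (2 D t (1 - t/T)) = κ T² / (t (T - t))` for `κ = b² / (2 D T)`, the integral becomes the
Gaussian integral `∫ exp (-κ u²) du = √(π / κ)`, up to the factor `2 T^{-1/2} exp (-4κ)`.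
-/

open Real Set MeasureTheory

lemma Real.rpow_three_halves {x : ℝ} (hx : 0 ≤ x) : x ^ ((3 : ℝ) / 2) = x * √x := by
  rw [show (3 : ℝ) / 2 = 1 + 1 / 2 by norm_num, rpow_add' hx (by norm_num), rpow_one,
    sqrt_eq_rpow]

noncomputable def bridgeCoord (T t : ℝ) : ℝ := (2 * t - T) / √(t * (T - t))

section bridgeCoord

variable {T t : ℝ}

lemma mul_sub_pos_of_mem_Ioo (ht : t ∈ Ioo 0 T) : 0 < t * (T - t) :=
  mul_pos ht.1 (sub_pos.2 ht.2)

lemma hasDerivAt_bridgeCoord (ht : t ∈ Ioo 0 T) :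
    HasDerivAt (bridgeCoord T) (T ^ 2 / (2 * (t * (T - t)) ^ ((3 : ℝ) / 2))) t := by
  have hp := mul_sub_pos_of_mem_Ioo ht
  have hs : 0 < √(t * (T - t)) := sqrt_pos.2 hp
  have hpoly : HasDerivAt (fun t => t * (T - t)) (T - 2 * t) t :=
    ((hasDerivAt_id' t).mul ((hasDerivAt_id' t).const_sub T)).congr_deriv (by ring)
  have hnum : HasDerivAt (fun t => 2 * t - T) 2 t := by
    simpa using ((hasDerivAt_id t).const_mul 2).sub_const T
  refine (hnum.div (hpoly.sqrt hp.ne') hs.ne').congr_deriv ?_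
  rw [rpow_three_halves hp.le]
  have hsq : √(t * (T - t)) ^ 2 = t * (T - t) := sq_sqrt hp.le
  have ht₀ : t ≠ 0 := ht.1.ne'
  have hTt : T - t ≠ 0 := (sub_pos.2 ht.2).ne'
  field_simp
  rw [hsq]
  ring

lemma strictMonoOn_bridgeCoord : StrictMonoOn (bridgeCoord T) (Ioo 0 T) := by
  refine strictMonoOn_of_deriv_pos (convex_Ioo 0 T)
    (fun t ht => (hasDerivAt_bridgeCoord ht).continuousAt.continuousWithinAt) fun t ht => ?_
  rw [interior_Ioo] at ht
  have hp := mul_sub_pos_of_mem_Ioo ht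
  rw [(hasDerivAt_bridgeCoord ht).deriv]
  have : T ≠ 0 := (ht.1.trans ht.2).ne'
  positivity

lemma bridgeCoord_sq (ht : t ∈ Ioo 0 T) :
    bridgeCoord T t ^ 2 = T ^ 2 / (t * (T - t)) - 4 := by
  have hp := mul_sub_pos_of_mem_Ioo ht
  rw [bridgeCoord, div_pow, sq_sqrt hp.le]
  have ht₀ : t ≠ 0 := ht.1.ne'
  have hTt : T - t ≠ 0 := (sub_pos.2 ht.2).ne'
  field_simp
  ring

lemma image_bridgeCoord (hT : 0 < T) : bridgeCoord T '' Ioo 0 T = univ := by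
  refine eq_univ_of_forall fun u => ?_
  set r := √(u ^ 2 + 4)
  have hr : 0 < r := sqrt_pos.2 (by positivity)
  have hr2 : r ^ 2 = u ^ 2 + 4 := sq_sqrt (by positivity)
  have hu : |u / r| < 1 := by
    rw [abs_div, abs_of_pos hr, div_lt_one hr, ← sq_lt_sq₀ (abs_nonneg u) hr.le, sq_abs]
    linarith
  obtain ⟨hu₁, hu₂⟩ := abs_lt.1 hu
  have hprod : T / 2 * (1 + u / r) * (T - T / 2 * (1 + u / r)) = (T / r) ^ 2 := by
    field_simp
    linear_combination hr2
  refine ⟨T / 2 * (1 + u / r), ⟨by nlinarith, by nlinarith⟩, ?_⟩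
  rw [bridgeCoord, hprod, sqrt_sq (by positivity)]
  field_simp
  ring

lemma integral_comp_bridgeCoord (hT : 0 < T) (g : ℝ → ℝ) :
    ∫ t in Ioo 0 T, T ^ 2 / (2 * (t * (T - t)) ^ ((3 : ℝ) / 2)) * g (bridgeCoord T t)
      = ∫ u, g u := by
  symm
  rw [← setIntegral_univ, ← image_bridgeCoord hT, integral_image_eq_integral_abs_deriv_smul
    measurableSet_Ioo (fun t ht => (hasDerivAt_bridgeCoord ht).hasDerivWithinAt)
    strictMonoOn_bridgeCoord.injOn]
  refine setIntegral_congr_fun measurableSet_Ioo fun t ht => ?_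
  have hp := mul_sub_pos_of_mem_Ioo ht
  rw [smul_eq_mul, abs_of_nonneg (by positivity)]

end bridgeCoord

lemma bridge_integrand_eq {D T b t : ℝ} (hD : 0 < D) (hT : 0 < T) (ht : t ∈ Ioo 0 T) :
    exp (-b ^ 2 / (2 * D * t * (1 - t / T))) / (t * (1 - t / T)) ^ ((3 : ℝ) / 2)
      = 2 / √T * exp (-(2 * b ^ 2) / (T * D)) * (T ^ 2 / (2 * (t * (T - t)) ^ ((3 : ℝ) / 2))
          * exp (-(b ^ 2 / (2 * D * T)) * bridgeCoord T t ^ 2)) := by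
  have hp := mul_sub_pos_of_mem_Ioo ht
  have ht₀ : t ≠ 0 := ht.1.ne'
  have hTt : T - t ≠ 0 := (sub_pos.2 ht.2).ne'
  have hexp : -(b ^ 2 / (2 * D * T)) * bridgeCoord T t ^ 2
      = -b ^ 2 / (2 * D * t * (1 - t / T)) - -(2 * b ^ 2) / (T * D) := by
    rw [bridgeCoord_sq ht]
    field_simp
    ring
  have hbase : t * (1 - t / T) = t * (T - t) / T := by field_simp
  have hsT : √T ^ 2 = T := sq_sqrt hT.le
  rw [hexp, exp_sub, hbase, div_rpow hp.le hT.le, rpow_three_halves hp.le,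
    rpow_three_halves hT.le]
  field_simp
  rw [hsT]

theorem bridge_integral_threehalves (D T b : ℝ) (hD : 0 < D) (hT : 0 < T) (hb : 0 < b) :
    ∫ t in Set.Ioo (0 : ℝ) T,
        Real.exp (-b ^ 2 / (2 * D * t * (1 - t / T))) / (t * (1 - t / T)) ^ ((3 : ℝ) / 2)
      = (2 * Real.sqrt (2 * Real.pi * D) / b) * Real.exp (-(2 * b ^ 2) / (T * D)) := by
  have hsqrt : √(π / (b ^ 2 / (2 * D * T))) = √(2 * π * D) * √T / b := by
    rw [← sqrt_mul (by positivity), sqrt_eq_iff_eq_sq (by positivity) (by positivity), div_pow,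
      sq_sqrt (by positivity)]
    field_simp
  have hsT : √T ≠ 0 := (sqrt_pos.2 hT).ne'
  rw [setIntegral_congr_fun measurableSet_Ioo fun t ht => bridge_integrand_eq hD hT ht,
    integral_const_mul, integral_comp_bridgeCoord hT fun u => exp (-(b ^ 2 / (2 * D * T)) * u ^ 2),
    integral_gaussian, hsqrt]
  field_simp
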